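/- Let v : ℝᵈ → ℝᵈ be smooth with ∇v(w) skew-symmetric at w, i.e., ∇v(w)ᵀ = −∇v(w). Then the consensus-optimization update w⁺ = w − ηv(w) − γ∇v(w)ᵀv(w) with γ = η²/2 agrees with the improved-Euler (RK2) update w⁺ = w − (η/2)(v(w) + v(w − ηv(w))) up to O(η³). -/

import Mathlib

open Asymptotics RealInnerProductSpace

private lemma aux_alg {F : Type*} [AddCommGroup F] [Module ℝ F]
    (w u z y : F) (η : ℝ) :
    w - η • u - (η ^ 2 / 2) • z - (w - (η / 2) • (u + y)) =
      (η / 2) • (y - u - η • z) := by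
  module

private lemma aux_rem {F : Type*} [NormedAddCommGroup F] [NormedSpace ℝ F] {g G : ℝ → F}
    (hgderiv : ∀ η : ℝ, HasDerivAt g (G η) η)
    (hGO : (fun η : ℝ => G η - G 0) =O[nhds 0] fun η : ℝ => η) :
    (fun η : ℝ => g η - g 0 - η • G 0) =O[nhds 0] fun η : ℝ => η ^ 2 := by
  obtain ⟨C, hCbd⟩ := isBigO_iff.mp hGO
  rw [Metric.eventually_nhds_iff] at hCbd
  obtain ⟨δ, hδpos, hδ⟩ := hCbd
  rw [isBigO_iff]
  refine ⟨|C|, Metric.eventually_nhds_iff.mpr ⟨δ, hδpos, ?_⟩⟩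
  intro η hη
  simp only [dist_zero_right, Real.norm_eq_abs] at hη
  have key : ‖(g η - η • G 0) - (g 0 - (0:ℝ) • G 0)‖ ≤ (|C| * |η|) * ‖η - 0‖ := by
    apply Convex.norm_image_sub_le_of_norm_hasDerivWithin_le
      (f := fun t => g t - t • G 0) (f' := fun t => G t - G 0) ?_ ?_ (convex_uIcc 0 η) ?_ ?_
    · intro t ht
      have h2 : HasDerivAt (fun t : ℝ => g t - t • G 0) (G t - G 0) t := by
        have h := (hgderiv t).sub ((hasDerivAt_id t).smul_const (G 0))
        simp only [one_smul] at h
        exact h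
      exact h2.hasDerivWithinAt
    · intro t ht
      have htle : |t| ≤ |η| := by
        rcases Set.mem_uIcc.mp ht with h | h
        · rw [abs_of_nonneg h.1, abs_of_nonneg (h.1.trans h.2)]; exact h.2
        · rw [abs_of_nonpos h.2, abs_of_nonpos (h.2.trans' h.1)]; linarith [h.1]
      have h1 : ‖G t - G 0‖ ≤ C * ‖t‖ := by
        apply hδ
        simp only [dist_zero_right, Real.norm_eq_abs]
        exact lt_of_le_of_lt htle hη
      calc ‖G t - G 0‖ ≤ C * ‖t‖ := h1
        _ ≤ |C| * ‖t‖ := mul_le_mul_of_nonneg_right (le_abs_self C) (norm_nonneg t)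
        _ ≤ |C| * |η| := by
            rw [Real.norm_eq_abs]
            exact mul_le_mul_of_nonneg_left htle (abs_nonneg C)
    · exact Set.left_mem_uIcc
    · exact Set.right_mem_uIcc
  have e1 : (g η - η • G 0) - (g 0 - (0:ℝ) • G 0) = g η - g 0 - η • G 0 := by
    simp only [zero_smul, sub_zero]; abel
  rw [e1] at key
  calc ‖g η - g 0 - η • G 0‖ ≤ (|C| * |η|) * ‖η - 0‖ := key
    _ = |C| * ‖η ^ 2‖ := by
        rw [sub_zero, Real.norm_eq_abs, Real.norm_eq_abs, abs_pow]
        ring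

/-- If `∇v(w)` is skew-symmetric at `w`, then the consensus-optimization update
`w⁺ = w − ηv(w) − γ∇v(w)ᵀv(w)` with `γ = η²/2` agrees with the improved-Euler
(RK2) update `w⁺ = w − (η/2)(v(w) + v(w − ηv(w)))` up to `O(η³)`. -/
theorem stmt_19 {d : ℕ} (v : EuclideanSpace ℝ (Fin d) → EuclideanSpace ℝ (Fin d))
    (hv : ContDiff ℝ (⊤ : ℕ∞) v) (w : EuclideanSpace ℝ (Fin d))
    (hskew : ∀ u1 u2 : EuclideanSpace ℝ (Fin d),
      ⟪fderiv ℝ v w u1, u2⟫ = -⟪u1, fderiv ℝ v w u2⟫) :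
    (fun η : ℝ =>
        (w - η • v w - (η ^ 2 / 2) •
            (ContinuousLinearMap.adjoint (fderiv ℝ v w)) (v w)) -
          (w - (η / 2) • (v w + v (w - η • v w))))
      =O[nhds 0] fun η : ℝ => η ^ 3 := by
  have hadj : (ContinuousLinearMap.adjoint (fderiv ℝ v w)) (v w) = -(fderiv ℝ v w (v w)) := by
    apply ext_inner_right ℝ
    intro y
    rw [ContinuousLinearMap.adjoint_inner_left, inner_neg_left]
    have := hskew (v w) y
    linarith
  have hcdiff : ContDiff ℝ (⊤ : ℕ∞) (fun η : ℝ => w - η • v w) :=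
    contDiff_const.sub (contDiff_id.smul contDiff_const)
  have hcderiv : ∀ η : ℝ, HasDerivAt (fun η : ℝ => w - η • v w) (-(v w)) η := by
    intro η
    have h1 : HasDerivAt (fun η : ℝ => η • v w) ((1:ℝ) • v w) η :=
      (hasDerivAt_id η).smul_const (v w)
    have h := (hasDerivAt_const η w).sub h1
    simp only [one_smul, zero_sub] at h
    exact h
  set g : ℝ → EuclideanSpace ℝ (Fin d) := fun η => v (w - η • v w) with hg
  set G : ℝ → EuclideanSpace ℝ (Fin d) := fun η => fderiv ℝ v (w - η • v w) (-(v w)) with hG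
  have hgderiv : ∀ η : ℝ, HasDerivAt g (G η) η := fun η =>
    ((hv.differentiable (by simp) _).hasFDerivAt).comp_hasDerivAt η (hcderiv η)
  have hGdiff : ContDiff ℝ (⊤ : ℕ∞) G := by
    have h1 : ContDiff ℝ (⊤ : ℕ∞) (fderiv ℝ v) := hv.fderiv_right (by simp)
    exact (ContinuousLinearMap.apply ℝ (EuclideanSpace ℝ (Fin d)) (-(v w))).contDiff.comp
      (h1.comp hcdiff)
  have hG0 : G 0 = -(fderiv ℝ v w (v w)) := by simp [hG]
  have hg0 : g 0 = v w := by simp [hg]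
  have hGO : (fun η : ℝ => G η - G 0) =O[nhds 0] fun η : ℝ => η := by
    simpa using ((hGdiff.differentiable (by simp) 0).hasFDerivAt).isBigO_sub
  have hrem := aux_rem hgderiv hGO
  have heq : (fun η : ℝ =>
        (w - η • v w - (η ^ 2 / 2) •
            (ContinuousLinearMap.adjoint (fderiv ℝ v w)) (v w)) -
          (w - (η / 2) • (v w + v (w - η • v w)))) =
      fun η : ℝ => (η / 2) • (g η - g 0 - η • G 0) := by
    funext η
    rw [hadj, hG0, hg0]
    exact aux_alg w (v w) (-(fderiv ℝ v w (v w))) (g η) η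
  rw [heq]
  have ha : (fun η : ℝ => η / 2) =O[nhds 0] fun η : ℝ => η := by
    exact ((isBigO_refl (fun η : ℝ => η) (nhds 0)).const_mul_left (1/2 : ℝ)).congr_left
      (fun x => by ring)
  have h2 := ha.smul hrem
  exact h2.congr' (Filter.Eventually.of_forall fun η => rfl)
    (Filter.Eventually.of_forall fun η => by simp only [smul_eq_mul]; ring)
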